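/- Under Assumptions 1 and 2, for every (t,p) ∈ T×S* and every P ∈ Γ(t,p), one has ∫_X p(x) dP(x) ≥ p(ω(t)). -/
import Mathlib


open MeasureTheory TopologicalSpace

noncomputable section

namespace RelaxedEconomy

variable {T : Type*} [MeasurableSpace T]
variable {E : Type*} [NormedAddCommGroup E] [NormedSpace ℝ E] [CompleteSpace E]
  [SeparableSpace E]

/-- A finite measure space is *saturated* if `L¹(μ|_S)` is nonseparable for every
measurable `S` with `μ S > 0`. -/
def IsSaturated (μ : Measure T) : Prop :=
  ∀ S : Set T, MeasurableSet S → 0 < μ S →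
    ¬ SeparableSpace (Lp ℝ 1 (μ.restrict S))

/-- The identity map from `E` to `E` with its weak topology. -/
def toWeak (x : E) : WeakSpace ℝ E := toWeakSpace ℝ E x

/-- The identity map from `E` with its weak topology back to `E`. -/
def fromWeak (x : WeakSpace ℝ E) : E := (toWeakSpace ℝ E).symm x

/-- Measurability of a `Π(X)`-valued map (a relaxed control / relaxed allocation):
`t ↦ λ(t)(C)` is measurable for every Borel set `C`. -/
def RMeasurable {α : Type*} [MeasurableSpace α] (lam : T → ProbabilityMeasure α) : Prop :=
  ∀ C : Set α, MeasurableSet C → Measurable fun t => lam t C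

variable (X : Set (WeakSpace ℝ E)) [MeasurableSpace ↥X] [BorelSpace ↥X]

/-- The Bochner barycenter `∫_X x dP` of `P ∈ Π(X)`. -/
def bary (P : ProbabilityMeasure ↥X) : E :=
  ∫ x, fromWeak (x : WeakSpace ℝ E) ∂(P : Measure ↥X)

/-- The budget set `B(t,p)`. -/
def Budget (ω : T → E) (t : T) (p : E → ℝ) : Set ↥X :=
  {x : ↥X | p (fromWeak (x : WeakSpace ℝ E)) ≤ p (ω t)}

/-- The demand set `D(t,p)`. -/
def Demand (u : T → ↥X → ℝ) (ω : T → E) (t : T) (p : E → ℝ) : Set ↥X :=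
  {x ∈ Budget X ω t p | ∀ y ∈ Budget X ω t p, u t y ≤ u t x}

/-- The relaxed budget set `B_R(t,p)`. -/
def RBudget (ω : T → E) (t : T) (p : E → ℝ) : Set (ProbabilityMeasure ↥X) :=
  {P | (∫ x, p (fromWeak (x : WeakSpace ℝ E)) ∂(P : Measure ↥X)) ≤ p (ω t)}

/-- The expected utility `∫_X u(t,x) dP`. -/
def rU (u : T → ↥X → ℝ) (t : T) (P : ProbabilityMeasure ↥X) : ℝ :=
  ∫ x, u t x ∂(P : Measure ↥X)

/-- The relaxed demand set `D_R(t,p)`. -/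
def RDemand (u : T → ↥X → ℝ) (ω : T → E) (t : T) (p : E → ℝ) :
    Set (ProbabilityMeasure ↥X) :=
  {P ∈ RBudget X ω t p | ∀ Q ∈ RBudget X ω t p, rU X u t Q ≤ rU X u t P}

/-- An allocation for the economy, with market constraint set `C`. -/
def IsAllocation (μ : Measure T) (ω : T → E) (C : Set E) (f : T → E) : Prop :=
  Integrable f μ ∧ (∀ᵐ t ∂μ, toWeak (f t) ∈ X) ∧
    (∫ t, f t ∂μ) - (∫ t, ω t ∂μ) ∈ C

/-- A relaxed allocation for the relaxed economy, with market constraint set `C`. -/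
def IsRAllocation (μ : Measure T) (ω : T → E) (C : Set E)
    (lam : T → ProbabilityMeasure ↥X) : Prop :=
  RMeasurable lam ∧ (∫ t, bary X (lam t) ∂μ) - (∫ t, ω t ∂μ) ∈ C

/-- `(p, f)` is a Walrasian equilibrium. -/
def IsWalrasEq (μ : Measure T) (u : T → ↥X → ℝ) (ω : T → E) (C : Set E)
    (p : E →L[ℝ] ℝ) (f : T → E) : Prop :=
  p ≠ 0 ∧ IsAllocation X μ ω C f ∧
    ∀ᵐ t ∂μ, ∃ h : toWeak (f t) ∈ X, (⟨toWeak (f t), h⟩ : ↥X) ∈ Demand X u ω t p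

/-- `(p, λ)` is a relaxed Walrasian equilibrium. -/
def IsRWalrasEq (μ : Measure T) (u : T → ↥X → ℝ) (ω : T → E) (C : Set E)
    (p : E →L[ℝ] ℝ) (lam : T → ProbabilityMeasure ↥X) : Prop :=
  p ≠ 0 ∧ IsRAllocation X μ ω C lam ∧
    ∀ᵐ t ∂μ, lam t ∈ RDemand X u ω t p

end RelaxedEconomy

namespace RelaxedEconomy

/-- The normalized price simplex `S* = {p ∈ E*₊ : p(v) = 1}`, as a subset of the
dual space with its weak* topology. -/
def Sstar {E : Type*} [NormedAddCommGroup E] [NormedSpace ℝ E] [PartialOrder E]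
    (v : E) : Set (WeakDual ℝ E) :=
  {p | (∀ x : E, 0 ≤ x → 0 ≤ p x) ∧ p v = 1}

variable {T : Type*} [MeasurableSpace T]
variable {E : Type*} [NormedAddCommGroup E] [NormedSpace ℝ E] [CompleteSpace E]
  [SeparableSpace E]

/-- The enlarged relaxed demand multifunction
`Γ(t,p) = {P ∈ Π(X) : ∫ u(t,·) dP ≥ ∫ u(t,·) dQ for all Q ∈ B_R(t,p)}`. -/
def Gam (X : Set (WeakSpace ℝ E)) [MeasurableSpace ↥X] (u : T → ↥X → ℝ) (ω : T → E)
    (t : T) (p : E → ℝ) : Set (ProbabilityMeasure ↥X) :=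
  {P | ∀ Q ∈ RBudget X ω t p, rU X u t Q ≤ rU X u t P}

/-- The multifunction of barycenters `I_Γ(t,p) = {∫_X x dP : P ∈ Γ(t,p)}`. -/
def IGam (X : Set (WeakSpace ℝ E)) [MeasurableSpace ↥X] (u : T → ↥X → ℝ) (ω : T → E)
    (t : T) (p : E → ℝ) : Set E :=
  (fun P => bary X P) '' Gam X u ω t p

/-- A multifunction `F : Y ⇒ Z` is upper semicontinuous if for every `y` and every
open `V ⊇ F(y)` there is a neighborhood `N` of `y` with `F(y') ⊆ V` for all `y' ∈ N`. -/
def USCMF {Y Z : Type*} [TopologicalSpace Y] [TopologicalSpace Z] (F : Y → Set Z) : Prop :=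
  ∀ y : Y, ∀ V : Set Z, IsOpen V → F y ⊆ V → ∃ N ∈ nhds y, ∀ y' ∈ N, F y' ⊆ V

/-- Convexity of a set of probability measures: stability under convex combinations. -/
def ConvexP {α : Type*} [MeasurableSpace α] (S : Set (ProbabilityMeasure α)) : Prop :=
  ∀ P ∈ S, ∀ Q ∈ S, ∀ a b : NNReal, a + b = 1 →
    ∀ R : ProbabilityMeasure α,
      (R : Measure α) = a • (P : Measure α) + b • (Q : Measure α) → R ∈ S

end RelaxedEconomy

namespace RelaxedEconomy

private lemma cont_integrable {α : Type*} [TopologicalSpace α] [CompactSpace α] [Nonempty α]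
    [MeasurableSpace α] [OpensMeasurableSpace α] (ν : Measure α) [IsFiniteMeasure ν]
    {g : α → ℝ} (hg : Continuous g) : Integrable g ν := by
  obtain ⟨x, -, hx⟩ := isCompact_univ.exists_isMaxOn Set.univ_nonempty hg.norm.continuousOn
  exact ⟨hg.aestronglyMeasurable, HasFiniteIntegral.of_bounded
    (C := ‖g x‖) (ae_of_all _ fun y => hx (Set.mem_univ y))⟩

/-- **Lemma 6.** Under Assumptions 1 and 2, every `P ∈ Γ(t,p)` with `p ∈ S*`
spends at least the value of the endowment: `∫_X p(x) dP ≥ p(ω(t))`. -/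
theorem stmt19
    {T : Type*} [MeasurableSpace T]
    {E : Type*} [NormedAddCommGroup E] [NormedSpace ℝ E] [CompleteSpace E]
    [SeparableSpace E]
    [PartialOrder E] [CovariantClass E E (· + ·) (· ≤ ·)]
    (hsmul : ∀ (c : ℝ) (x : E), 0 ≤ c → 0 ≤ x → 0 ≤ c • x)
    (μ : Measure T) [IsFiniteMeasure μ] (hμcomp : μ.IsComplete)
    (X : Set (WeakSpace ℝ E)) [MeasurableSpace ↥X] [BorelSpace ↥X]
    (u : T → ↥X → ℝ) (ω : T → E)
    -- Assumption 1
    (hXcomp : IsCompact X)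
    (humeas : ∀ x : ↥X, Measurable fun t => u t x)
    (hucont : ∀ t : T, Continuous (u t))
    (hωint : Integrable ω μ) (hωX : ∀ t, toWeak (ω t) ∈ X)
    -- Assumption 2
    (hXpos : ∀ x ∈ X, 0 ≤ fromWeak x)
    (hcheap : ∀ t, ∃ z : E, toWeak z ∈ X ∧ ω t - z ∈ interior {x : E | 0 ≤ x})
    (hsatiate : ∀ t, ∀ x : ↥X, (∀ y : ↥X, u t y ≤ u t x) → ω t ≤ fromWeak (x : WeakSpace ℝ E))
    (hnonsat : ∀ t, ∀ x : ↥X, ¬ (∀ y : ↥X, u t y ≤ u t x) →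
      x ∈ closure {y : ↥X | u t x < u t y})
    -- `v` is a point of the norm interior of the positive cone, fixing `S*`
    (v : E) (hv : v ∈ interior {x : E | 0 ≤ x}) :
    ∀ (t : T), ∀ p ∈ Sstar v, ∀ P ∈ Gam X u ω t (fun x => p x),
      p (ω t) ≤ ∫ x, p (fromWeak (x : WeakSpace ℝ E)) ∂(P : Measure ↥X) := by
  intro t p hp P hP
  by_contra hcon
  push_neg at hcon
  haveI : CompactSpace ↥X := isCompact_iff_compactSpace.mp hXcomp
  haveI : Nonempty ↥X := ⟨⟨toWeak (ω t), hωX t⟩⟩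
  set f : ↥X → ℝ := fun x => p (fromWeak (x : WeakSpace ℝ E)) with hfdef
  have hfc : Continuous f := by
    have h1 : Continuous fun x : WeakSpace ℝ E => p x :=
      WeakBilin.eval_continuous ((topDualPairing ℝ E).flip) p
    exact h1.comp continuous_subtype_val
  have hgc : Continuous (u t) := hucont t
  obtain ⟨x0, -, hx0⟩ := isCompact_univ.exists_isMaxOn Set.univ_nonempty hgc.continuousOn
  have hx0' : ∀ y : ↥X, u t y ≤ u t x0 := fun y => hx0 (Set.mem_univ y)
  have hfint : Integrable f (P : Measure ↥X) := cont_integrable _ hfc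
  have hgint : Integrable (u t) (P : Measure ↥X) := cont_integrable _ hgc
  set a := ∫ x, f x ∂(P : Measure ↥X) with ha
  set b := p (ω t) with hb
  have hlt : a < b := hcon
  set c := f x0 with hc
  set d := |c - a| with hd
  set ε := min 1 ((b - a) / (d + 1)) with hεdef
  have hd0 : (0:ℝ) ≤ d := abs_nonneg _
  have hba : (0:ℝ) < b - a := sub_pos.mpr hlt
  have hε0 : (0:ℝ) < ε := lt_min one_pos (div_pos hba (by linarith))
  have hε1 : ε ≤ 1 := min_le_left _ _
  have hεkey : a + ε * (c - a) ≤ b := by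
    have h1 : ε * (d + 1) ≤ b - a := by
      have h2 := min_le_right 1 ((b - a) / (d + 1))
      calc ε * (d + 1) ≤ ((b - a) / (d + 1)) * (d + 1) :=
            mul_le_mul_of_nonneg_right h2 (by linarith)
        _ = b - a := by field_simp
    have h2 : ε * (c - a) ≤ ε * d := mul_le_mul_of_nonneg_left (le_abs_self _) hε0.le
    nlinarith
  set ν : Measure ↥X :=
    ENNReal.ofReal (1 - ε) • (P : Measure ↥X) + ENNReal.ofReal ε • Measure.dirac x0 with hν
  have hνprob : IsProbabilityMeasure ν := by
    constructor
    rw [hν, Measure.add_apply, Measure.smul_apply, Measure.smul_apply, measure_univ,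
      measure_univ, smul_eq_mul, smul_eq_mul, mul_one, mul_one,
      ← ENNReal.ofReal_add (by linarith) hε0.le]
    norm_num
  have hint : ∀ g : ↥X → ℝ, Continuous g →
      ∫ x, g x ∂ν = (1 - ε) * (∫ x, g x ∂(P : Measure ↥X)) + ε * g x0 := by
    intro g hg
    rw [hν, integral_add_measure
        ((cont_integrable _ hg).smul_measure ENNReal.ofReal_ne_top)
        ((cont_integrable _ hg).smul_measure ENNReal.ofReal_ne_top),
      integral_smul_measure, integral_smul_measure,
      integral_dirac' g x0 hg.stronglyMeasurable,
      ENNReal.toReal_ofReal (by linarith), ENNReal.toReal_ofReal hε0.le,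
      smul_eq_mul, smul_eq_mul]
  set Q : ProbabilityMeasure ↥X := ⟨ν, hνprob⟩ with hQ
  have hQB : Q ∈ RBudget X ω t (fun x => p x) := by
    show (∫ x, p (fromWeak (x : WeakSpace ℝ E)) ∂ν) ≤ p (ω t)
    have : (∫ x, f x ∂ν) ≤ b := by
      rw [hint f hfc]
      have : (1 - ε) * a + ε * c = a + ε * (c - a) := by ring
      linarith
    exact this
  have hle := hP Q hQB
  have hrQ : rU X u t Q = (1 - ε) * (∫ x, u t x ∂(P : Measure ↥X)) + ε * u t x0 :=
    hint (u t) hgc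
  set I := ∫ x, u t x ∂(P : Measure ↥X) with hI
  have hle' : (1 - ε) * I + ε * u t x0 ≤ I := by
    rw [← hrQ]; exact hle
  have hMle : u t x0 ≤ I := by nlinarith
  have hIle : I ≤ u t x0 := by
    calc I ≤ ∫ _x, u t x0 ∂(P : Measure ↥X) :=
          integral_mono hgint (integrable_const _) hx0'
      _ = u t x0 := by simp
  have hIeq : I = u t x0 := le_antisymm hIle hMle
  have h0 : ∫ x, (u t x0 - u t x) ∂(P : Measure ↥X) = 0 := by
    rw [integral_sub (integrable_const _) hgint]
    simp [← hI, hIeq]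
  have hae := (integral_eq_zero_iff_of_nonneg
    (fun x => sub_nonneg.mpr (hx0' x)) ((integrable_const _).sub hgint)).mp h0
  have hae2 : ∀ᵐ x ∂(P : Measure ↥X), b ≤ f x := by
    filter_upwards [hae] with x hx
    have hx' : u t x0 - u t x = 0 := hx
    have hxsat : ∀ y : ↥X, u t y ≤ u t x := by
      intro y
      have : u t x = u t x0 := by linarith
      rw [this]; exact hx0' y
    have hωle := hsatiate t x hxsat
    have h0' : 0 ≤ p (fromWeak (x : WeakSpace ℝ E) - ω t) :=
      hp.1 _ (sub_nonneg.mpr hωle)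
    have heq : p (fromWeak (x : WeakSpace ℝ E) - ω t) = f x - b := by
      rw [map_sub]
    linarith
  have hba' : b ≤ a := by
    calc b = ∫ _x, b ∂(P : Measure ↥X) := by simp
      _ ≤ a := integral_mono_ae (integrable_const _) hfint hae2
  linarith

end RelaxedEconomy
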